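/- Exact adjoint relation with boundary term on a rectangular box (Proposition 3.1 on a box). Let d ≥ 1, s ∈ ℝ, let l, r ∈ ℝ^d with l_i ≤ r_i for all i, and set Ω = Π_{i=1}^d [l_i, r_i] ⊂ ℝ^d. Let a, u, v : ℝ^d → ℝ^d be continuously differentiable on an open neighborhood of Ω. Then ∫_Ω v · (A_s^a u) dx = − ∫_Ω (A_{1−s}^a v) · u dx + Σ_{i=1}^d ( ∫_{F_i^+} (v·u) a_i dσ − ∫_{F_i^−} (v·u) a_i dσ ), where F_i^+ (resp. F_i^−) is the face of Ω on which the i-th coordinate equals r_i (resp. l_i), the face integrals are (d−1)-dimensional Lebesgue integrals over the remaining coordinates ranging over Π_{j≠i}[l_j, r_j], and a_i is the i-th component of a. In inner-product/normal notation this reads ⟨v, A_s^a u⟩_Ω = ⟨−A_{1−s}^a v, u⟩_Ω + ∮_{∂Ω} (v·u)(a·n̂) dσ with n̂ the outward unit normal to ∂Ω. -/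

import Mathlib

open MeasureTheory

/-- `pd f j x` is the partial derivative `∂_j f (x)`, i.e. the `j`-th component of the
Fréchet derivative of `f : ℝ^d → ℝ` at `x`. -/
noncomputable def pd {d : ℕ} (f : (Fin d → ℝ) → ℝ) (j : Fin d) (x : Fin d → ℝ) : ℝ :=
  fderiv ℝ f x (Pi.single j 1)

/-- `adv a s w x i` is the `i`-th component at `x` of the generalized linear advection
operator `(A_s^a w)(x) = ((a·∇)w)(x) + s (div a)(x) w(x)`. -/
noncomputable def adv {d : ℕ} (a : (Fin d → ℝ) → Fin d → ℝ) (s : ℝ)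
    (w : (Fin d → ℝ) → Fin d → ℝ) (x : Fin d → ℝ) (i : Fin d) : ℝ :=
  (∑ j, a x j * pd (fun y => w y i) j x)
    + s * (∑ j, pd (fun y => a y j) j x) * w x i

/-- `facePt i c y` is the point of `ℝ^d` whose `i`-th coordinate is `c` and whose
remaining coordinates are given by `y : ℝ^{d-1}` (indexed by `{j // j ≠ i}`): it
parametrizes the face `x_i = c` of a box by the remaining coordinates. -/
def facePt {d : ℕ} (i : Fin d) (c : ℝ) (y : {j : Fin d // j ≠ i} → ℝ) : Fin d → ℝ :=
  fun j => if h : j = i then c else y ⟨j, h⟩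

/-!
The integrands `v · A_s^a u` and `(A_{1-s}^a v) · u` add up pointwise to the divergence of the
flux `(v · u) a`: the transport terms combine by the product rule into `a · ∇(v · u)`, and the
multiples `s` and `1 - s` of `div a` into `(v · u) div a`. The divergence theorem on the box turns
the integral of this divergence into the face integrals, once Mathlib's parametrization
`Fin.insertNth` of the faces by `Fin n → ℝ` is matched with `facePt` through the reindexing
`Fin n ≃ {j // j ≠ i}`.
-/

open Set

noncomputable def divergence {d : ℕ} (F : (Fin d → ℝ) → Fin d → ℝ) (x : Fin d → ℝ) : ℝ :=
  ∑ j, pd (fun y => F y j) j x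

section PartialDerivative

variable {d : ℕ} {f g : (Fin d → ℝ) → ℝ} {x : Fin d → ℝ}

lemma pd_mul (j : Fin d) (hf : DifferentiableAt ℝ f x) (hg : DifferentiableAt ℝ g x) :
    pd (fun y => f y * g y) j x = pd f j x * g x + f x * pd g j x := by
  simp only [pd, fderiv_fun_mul hf hg, add_apply, smul_apply, smul_eq_mul]
  ring

lemma pd_finset_sum {ι : Type*} {t : Finset ι} {f : ι → (Fin d → ℝ) → ℝ} (j : Fin d)
    (hf : ∀ k ∈ t, DifferentiableAt ℝ (f k) x) :
    pd (fun y => ∑ k ∈ t, f k y) j x = ∑ k ∈ t, pd (f k) j x := by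
  simp only [pd, fderiv_fun_sum hf, sum_apply]

lemma ContDiffOn.continuousOn_pd {U : Set (Fin d → ℝ)} (hf : ContDiffOn ℝ 1 f U) (hU : IsOpen U)
    (j : Fin d) : ContinuousOn (pd f j) U :=
  (hf.continuousOn_fderiv_of_isOpen hU le_rfl).clm_apply continuousOn_const

end PartialDerivative

lemma ContDiffOn.continuousOn_adv {d : ℕ} {a w : (Fin d → ℝ) → Fin d → ℝ} {U : Set (Fin d → ℝ)}
    (ha : ContDiffOn ℝ 1 a U) (hw : ContDiffOn ℝ 1 w U) (hU : IsOpen U) (s : ℝ) (i : Fin d) :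
    ContinuousOn (fun x => adv a s w x i) U := by
  have hwi := contDiffOn_pi.1 hw i
  have haj := contDiffOn_pi.1 ha
  unfold adv
  exact (continuousOn_finsetSum _ fun j _ =>
      (haj j).continuousOn.mul (hwi.continuousOn_pd hU j)).add
    ((continuousOn_const.mul (continuousOn_finsetSum _ fun j _ =>
      (haj j).continuousOn_pd hU j)).mul hwi.continuousOn)

lemma dot_adv_add_adv_dot_eq_divergence {d : ℕ} {a u v : (Fin d → ℝ) → Fin d → ℝ}
    {x : Fin d → ℝ} (ha : DifferentiableAt ℝ a x) (hu : DifferentiableAt ℝ u x)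
    (hv : DifferentiableAt ℝ v x) (s : ℝ) :
    (∑ i, v x i * adv a s u x i) + ∑ i, adv a (1 - s) v x i * u x i
      = divergence (fun y j => (∑ k, v y k * u y k) * a y j) x := by
  have ha' := differentiableAt_pi.1 ha
  have hu' := differentiableAt_pi.1 hu
  have hv' := differentiableAt_pi.1 hv
  have hvu : ∀ k ∈ Finset.univ, DifferentiableAt ℝ (fun y => v y k * u y k) x :=
    fun k _ => (hv' k).mul (hu' k)
  simp only [divergence, adv, pd_mul _ (DifferentiableAt.fun_sum hvu) (ha' _),
    pd_finset_sum _ hvu, pd_mul _ (hv' _) (hu' _)]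
  simp only [Finset.mul_sum, Finset.sum_mul, mul_add, add_mul, Finset.sum_add_distrib]
  simp only [← Finset.sum_add_distrib]
  rw [Finset.sum_comm]
  exact Finset.sum_congr rfl fun j _ => Finset.sum_congr rfl fun i _ => by ring

lemma integral_divergence_of_contDiffOn {n : ℕ} {l r : Fin (n + 1) → ℝ} (hlr : l ≤ r)
    {F : (Fin (n + 1) → ℝ) → Fin (n + 1) → ℝ} {U : Set (Fin (n + 1) → ℝ)} (hU : IsOpen U)
    (hΩU : Icc l r ⊆ U) (hF : ContDiffOn ℝ 1 F U) :
    ∫ x in Icc l r, divergence F x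
      = ∑ i, ((∫ x in Icc (l ∘ i.succAbove) (r ∘ i.succAbove), F (i.insertNth (r i) x) i)
          - ∫ x in Icc (l ∘ i.succAbove) (r ∘ i.succAbove), F (i.insertNth (l i) x) i) := by
  have hFi := contDiffOn_pi.1 hF
  refine integral_divergence_of_hasFDerivAt_off_countable' l r hlr (fun i y => F y i)
    (fun i y => fderiv ℝ (fun y => F y i) y) ∅ countable_empty
    (fun i => (hFi i).continuousOn.mono hΩU) (fun x hx i => ?_)
    ((continuousOn_finsetSum _ fun i _ => (hFi i).continuousOn_pd hU i).mono hΩU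
      |>.integrableOn_compact isCompact_Icc)
  have hxU : x ∈ U := hΩU (pi_univ_Icc l r ▸ pi_mono (fun i _ => Ioo_subset_Icc_self) hx.1)
  exact ((hFi i).differentiableOn one_ne_zero |>.differentiableAt (hU.mem_nhds hxU)).hasFDerivAt

lemma facePt_piCongrLeft_finSuccAboveEquiv {n : ℕ} (i : Fin (n + 1)) (c : ℝ) (x : Fin n → ℝ) :
    facePt i c (Equiv.piCongrLeft (fun _ => ℝ) (finSuccAboveEquiv i) x) = i.insertNth c x := by
  funext j
  rcases eq_or_ne j i with rfl | hj
  · simp [facePt]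
  · obtain ⟨k, rfl⟩ := Fin.exists_succAbove_eq hj
    simp only [facePt, dif_neg hj, Fin.insertNth_apply_succAbove]
    exact Equiv.piCongrLeft_apply_apply (fun _ => ℝ) (finSuccAboveEquiv i) x k

lemma setIntegral_facePt {E : Type*} [NormedAddCommGroup E] [NormedSpace ℝ E] {n : ℕ}
    (i : Fin (n + 1)) (c : ℝ) (l r : Fin (n + 1) → ℝ) (g : (Fin (n + 1) → ℝ) → E) :
    ∫ y in Icc (fun j : {j // j ≠ i} => l j.1) (fun j => r j.1), g (facePt i c y)
      = ∫ x in Icc (l ∘ i.succAbove) (r ∘ i.succAbove), g (i.insertNth c x) := by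
  have hT := volume_measurePreserving_piCongrLeft (fun _ : {j // j ≠ i} => ℝ)
    (finSuccAboveEquiv i)
  rw [← hT.setIntegral_preimage_emb (MeasurableEquiv.measurableEmbedding _),
    MeasurableEquiv.coe_piCongrLeft, ← pi_univ_Icc, Equiv.piCongrLeft_preimage_univ_pi,
    ← pi_univ_Icc]
  simp only [facePt_piCongrLeft_finSuccAboveEquiv, finSuccAboveEquiv_apply, Function.comp_apply]

theorem advection_adjoint_with_boundary_on_box_general
    (d : ℕ) (s : ℝ) (l r : Fin d → ℝ) (hlr : ∀ i, l i ≤ r i)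
    (a u v : (Fin d → ℝ) → Fin d → ℝ)
    (U : Set (Fin d → ℝ)) (hU : IsOpen U) (hΩU : Set.Icc l r ⊆ U)
    (ha : ContDiffOn ℝ 1 a U) (hu : ContDiffOn ℝ 1 u U) (hv : ContDiffOn ℝ 1 v U) :
    ∫ x in Set.Icc l r, ∑ i, v x i * adv a s u x i
      = (- ∫ x in Set.Icc l r, ∑ i, adv a (1 - s) v x i * u x i)
        + ∑ i : Fin d,
            ((∫ y in Set.Icc (fun j : {j : Fin d // j ≠ i} => l j.1)
                            (fun j : {j : Fin d // j ≠ i} => r j.1),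
                (∑ k, v (facePt i (r i) y) k * u (facePt i (r i) y) k)
                  * a (facePt i (r i) y) i)
             - ∫ y in Set.Icc (fun j : {j : Fin d // j ≠ i} => l j.1)
                             (fun j : {j : Fin d // j ≠ i} => r j.1),
                (∑ k, v (facePt i (l i) y) k * u (facePt i (l i) y) k)
                  * a (facePt i (l i) y) i) := by
  rcases d with _ | n
  · simp
  have hflux : ContDiffOn ℝ 1 (fun y j => (∑ k, v y k * u y k) * a y j) U :=
    contDiffOn_pi.2 fun j => (ContDiffOn.sum fun k _ =>
      (contDiffOn_pi.1 hv k).mul (contDiffOn_pi.1 hu k)).mul (contDiffOn_pi.1 ha j)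
  have hint : ∀ {f : (Fin (n + 1) → ℝ) → ℝ}, ContinuousOn f U → IntegrableOn f (Icc l r) :=
    fun hf => (hf.mono hΩU).integrableOn_compact isCompact_Icc
  have hdiff : ∀ {w : (Fin (n + 1) → ℝ) → Fin (n + 1) → ℝ}, ContDiffOn ℝ 1 w U →
      ∀ x ∈ Icc l r, DifferentiableAt ℝ w x := fun hw x hx =>
    (hw.differentiableOn one_ne_zero).differentiableAt (hU.mem_nhds (hΩU hx))
  have hint_left : IntegrableOn (fun x => ∑ i, v x i * adv a s u x i) (Icc l r) :=
    hint (continuousOn_finsetSum _ fun i _ =>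
      (contDiffOn_pi.1 hv i).continuousOn.mul (ha.continuousOn_adv hu hU s i))
  have hint_right : IntegrableOn (fun x => ∑ i, adv a (1 - s) v x i * u x i) (Icc l r) :=
    hint (continuousOn_finsetSum _ fun i _ =>
      (ha.continuousOn_adv hv hU (1 - s) i).mul (contDiffOn_pi.1 hu i).continuousOn)
  have hbulk : (∫ x in Icc l r, ∑ i, v x i * adv a s u x i)
      + (∫ x in Icc l r, ∑ i, adv a (1 - s) v x i * u x i)
      = ∫ x in Icc l r, divergence (fun y j => (∑ k, v y k * u y k) * a y j) x := by
    rw [← integral_add hint_left hint_right]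
    exact setIntegral_congr_fun measurableSet_Icc fun x hx =>
      dot_adv_add_adv_dot_eq_divergence (hdiff ha x hx) (hdiff hu x hx) (hdiff hv x hx) s
  rw [eq_neg_add_iff_add_eq, add_comm, hbulk, integral_divergence_of_contDiffOn hlr hU hΩU hflux]
  refine Finset.sum_congr rfl fun i _ => ?_
  rw [setIntegral_facePt i (r i) l r fun x => (∑ k, v x k * u x k) * a x i,
    setIntegral_facePt i (l i) l r fun x => (∑ k, v x k * u x k) * a x i]

/-- Exact adjoint relation with boundary term on a rectangular box
`Ω = Π_i [l_i, r_i]`: for `a, u, v` continuously differentiable on an open neighborhood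
`U` of `Ω`, one has
`∫_Ω v·(A_s^a u) = −∫_Ω (A_{1−s}^a v)·u + Σ_i (∫_{F_i^+} (v·u) a_i − ∫_{F_i^−} (v·u) a_i)`,
where `F_i^±` are the faces `x_i = r_i` and `x_i = l_i`, parametrized by the remaining
coordinates ranging over `Π_{j≠i}[l_j, r_j]` with `(d−1)`-dimensional Lebesgue measure. -/
theorem advection_adjoint_with_boundary_on_box
    (d : ℕ) (hd : 1 ≤ d) (s : ℝ) (l r : Fin d → ℝ) (hlr : ∀ i, l i ≤ r i)
    (a u v : (Fin d → ℝ) → Fin d → ℝ)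
    (U : Set (Fin d → ℝ)) (hU : IsOpen U) (hΩU : Set.Icc l r ⊆ U)
    (ha : ContDiffOn ℝ 1 a U) (hu : ContDiffOn ℝ 1 u U) (hv : ContDiffOn ℝ 1 v U) :
    ∫ x in Set.Icc l r, ∑ i, v x i * adv a s u x i
      = (- ∫ x in Set.Icc l r, ∑ i, adv a (1 - s) v x i * u x i)
        + ∑ i : Fin d,
            ((∫ y in Set.Icc (fun j : {j : Fin d // j ≠ i} => l j.1)
                            (fun j : {j : Fin d // j ≠ i} => r j.1),
                (∑ k, v (facePt i (r i) y) k * u (facePt i (r i) y) k)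
                  * a (facePt i (r i) y) i)
             - ∫ y in Set.Icc (fun j : {j : Fin d // j ≠ i} => l j.1)
                             (fun j : {j : Fin d // j ≠ i} => r j.1),
                (∑ k, v (facePt i (l i) y) k * u (facePt i (l i) y) k)
                  * a (facePt i (l i) y) i) :=
  advection_adjoint_with_boundary_on_box_general d s l r hlr a u v U hU hΩU ha hu hv
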